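/- There exists a constant C > 0 such that for every integer q ≥ 2, every integer k ≥ 9, and any two words w and w' of the same length k over an alphabet of q letters with the autocorrelation of w larger than the autocorrelation of w', one has |A_w(q)³·A_{w'}'(q) − A_{w'}(q)³·A_w'(q)| / (A_{w'}(q)³·A_w(q)³) ≤ C·k·q^{-k/3+4}·(A_w(q) − A_{w'}(q)) / (A_{w'}(q)·A_w(q)). -/

import Mathlib

/-- The `i`-th autocorrelation bit `b_i` of a word `w` (for `1 ≤ i ≤ w.length`):
`1` if the prefix of `w` of length `i` equals the suffix of `w` of length `i`, else `0`. -/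
def acorrBit {α : Type*} [DecidableEq α] (w : List α) (i : ℕ) : ℕ :=
  if w.take i = w.drop (w.length - i) then 1 else 0

/-- The inverse autocorrelation polynomial `A_w(x) = ∑_{i=1}^k b_i x^(i-1)`, over `ℝ`. -/
noncomputable def APolyR {α : Type*} [DecidableEq α] (w : List α) : Polynomial ℝ :=
  ∑ i ∈ Finset.range w.length, Polynomial.C (acorrBit w (i + 1) : ℝ) * Polynomial.X ^ i

/-- The inverse autocorrelation polynomial `A_w(x)`, over `ℂ`. -/
noncomputable def APolyC {α : Type*} [DecidableEq α] (w : List α) : Polynomial ℂ :=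
  ∑ i ∈ Finset.range w.length, Polynomial.C (acorrBit w (i + 1) : ℂ) * Polynomial.X ^ i

/-- The recurrence polynomial `P_w(x) = 1 + (x - q)·A_w(x)`, over `ℝ`. -/
noncomputable def PPolyR (q : ℕ) {α : Type*} [DecidableEq α] (w : List α) : Polynomial ℝ :=
  1 + (Polynomial.X - Polynomial.C (q : ℝ)) * APolyR w

/-- The recurrence polynomial `P_w(x) = 1 + (x - q)·A_w(x)`, over `ℂ`. -/
noncomputable def PPolyC (q : ℕ) {α : Type*} [DecidableEq α] (w : List α) : Polynomial ℂ :=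
  1 + (Polynomial.X - Polynomial.C (q : ℂ)) * APolyC w

/-- `h_w(n)`: the number of words of length `n` over `Fin q` whose last `w.length` letters
equal `w` and which contain no other occurrence of `w` as consecutive letters. -/
noncomputable def hitCount (q : ℕ) (w : List (Fin q)) (n : ℕ) : ℕ :=
  Nat.card {l : List (Fin q) // l.length = n ∧ l.drop (n - w.length) = w ∧
    ∀ p < n - w.length, (l.drop p).take w.length ≠ w}

/-- The first hitting probability `P_h(w,n) = h_w(n+k)/q^(n+k)` where `k = w.length`. -/
noncomputable def hitProb (q : ℕ) (w : List (Fin q)) (n : ℕ) : ℝ :=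
  (hitCount q w (n + w.length) : ℝ) / (q : ℝ) ^ (n + w.length)

/-- The constant `C_{w/w'} = ln(1+r)/r` with `r = (A_w(q) − A_{w'}(q))/A_{w'}(q)`. -/
noncomputable def Crat (q : ℕ) (w w' : List (Fin q)) : ℝ :=
  Real.log (1 + ((APolyR w).eval (q : ℝ) - (APolyR w').eval (q : ℝ)) / (APolyR w').eval (q : ℝ)) /
    (((APolyR w).eval (q : ℝ) - (APolyR w').eval (q : ℝ)) / (APolyR w').eval (q : ℝ))

/-- The partial-fraction coefficient `c_w = 1/P_w'(α_m)`. -/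
noncomputable def cwCoef (q : ℕ) (w : List (Fin q)) (αm : ℝ) : ℝ :=
  1 / ((PPolyR q w).derivative.eval αm)

/-!
Write `a = A_w(q)`, `b = A_{w'}(q)`, and let `d` be the largest index at which the coefficient
sequences of `A_w` and `A_{w'}` differ; comparing the binary numbers forces the coefficient of
`x ^ d` to be `1` in `A_w` and `0` in `A_{w'}`. The numerator is
`a³ (A_{w'}'(q) - A_w'(q)) + A_w'(q) (a³ - b³)`. The second term is handled by
`q A_w'(q) ≤ k a` and `a³ - b³ ≤ 3 a² (a - b)`, the first by `|A_w'(q) - A_{w'}'(q)| ≤ k q^d`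
together with `q^d ≤ q^(⌊k/2⌋ + 2) (a - b)`. For `d ≤ k/2` the latter only needs `a - b ≥ 1`.
For larger `d`, borders of `w'` of the consecutive lengths `d - 1` and `d` would make `w'`
constant, so one of them is missing and the lower coefficients of `A_{w'}` sum to less than
`q^d - q^(d-2)` at `q`.
-/

open Finset

section Autocorrelation

variable {α : Type*} [DecidableEq α]

theorem acorrBit_le_one (w : List α) (i : ℕ) : acorrBit w i ≤ 1 := by
  unfold acorrBit
  split <;> simp

theorem acorrBit_replicate (n i : ℕ) (a : α) : acorrBit (List.replicate n a) i = 1 := by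
  simp only [acorrBit, List.take_replicate, List.drop_replicate, List.length_replicate]
  rw [if_pos]
  congr 1
  omega

theorem getElem?_eq_of_acorrBit_eq_one {w : List α} {i m : ℕ} (h : acorrBit w i = 1)
    (hm : m < i) : w[m]? = w[w.length - i + m]? := by
  have hb : w.take i = w.drop (w.length - i) := by
    by_contra hne
    simp [acorrBit, hne] at h
  simpa [List.getElem?_take, hm] using congrArg (·[m]?) hb

/-- Borders of lengths `n` and `n + 1` give periods `p + 1` and `p`, and `2 p + 1 ≤ |w|` lets
them combine into the period `1` (a case of the Fine–Wilf theorem). -/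
theorem acorrBit_eq_one_of_consecutive {w : List α} {n : ℕ} (hn : w.length ≤ 2 * n + 1)
    (hn' : n + 1 ≤ w.length) (h₁ : acorrBit w n = 1) (h₂ : acorrBit w (n + 1) = 1) (i : ℕ) :
    acorrBit w i = 1 := by
  have hstep : ∀ m, m + 1 < w.length → w[m]? = w[m + 1]? := by
    intro m hm
    by_cases hmn : m < n
    · rw [getElem?_eq_of_acorrBit_eq_one h₁ hmn,
        getElem?_eq_of_acorrBit_eq_one h₂ (show m + 1 < n + 1 by omega)]
      congr 1
      omega
    · have e₁ := getElem?_eq_of_acorrBit_eq_one h₂ (m := m - (w.length - (n + 1))) (by omega)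
      have e₂ := getElem?_eq_of_acorrBit_eq_one h₁ (m := m - (w.length - (n + 1))) (by omega)
      rw [show w.length - (n + 1) + (m - (w.length - (n + 1))) = m by omega] at e₁
      rw [show w.length - n + (m - (w.length - (n + 1))) = m + 1 by omega] at e₂
      rw [← e₁, e₂]
  have hchain : List.IsChain (· = ·) w := List.isChain_iff_getElem.mpr fun m hm => by
    simpa [List.getElem?_eq_getElem hm, List.getElem?_eq_getElem (show m < w.length by omega)]
      using hstep m hm
  obtain ⟨a, ha⟩ : ∃ a, w.head? = some a := Option.ne_none_iff_exists'.mp (by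
    rw [Ne, List.head?_eq_none_iff]; rintro rfl; simp at hn')
  rw [List.isChain_eq_iff_eq_replicate.mp hchain a (by simp [ha])]
  exact acorrBit_replicate _ _ _

end Autocorrelation

theorem sum_mul_pow_le_pow_sub_one {Q : ℝ} (hQ : 2 ≤ Q) {c : ℕ → ℝ} (hc : ∀ i, c i ≤ 1)
    (n : ℕ) : ∑ i ∈ range n, c i * Q ^ i ≤ Q ^ n - 1 := by
  induction n with
  | zero => simp
  | succ n ih =>
    have hcn : c n * Q ^ n ≤ Q ^ n := mul_le_of_le_one_left (by positivity) (hc n)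
    rw [sum_range_succ, pow_succ]
    nlinarith [pow_nonneg (show (0 : ℝ) ≤ Q by linarith) n]

structure TopDiffAt (n : ℕ) (β β' : ℕ → ℕ) (d : ℕ) : Prop where
  lt : d < n
  left_eq_one : β d = 1
  right_eq_zero : β' d = 0
  eq_of_lt : ∀ i, d < i → i < n → β i = β' i

theorem exists_topDiffAt_of_sum_lt {Q : ℝ} (hQ : 2 ≤ Q) {β β' : ℕ → ℕ} (hβ : ∀ i, β i ≤ 1)
    {n : ℕ} (h : ∑ i ∈ range n, (β' i : ℝ) * Q ^ i < ∑ i ∈ range n, (β i : ℝ) * Q ^ i) :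
    ∃ d, TopDiffAt n β β' d := by
  induction n with
  | zero => simp at h
  | succ n ih =>
    rw [sum_range_succ, sum_range_succ] at h
    rcases lt_trichotomy (β' n) (β n) with hlt | heq | hgt
    · have := hβ n
      exact ⟨n, ⟨by omega, by omega, by omega, fun i _ _ => by omega⟩⟩
    · obtain ⟨d, hd⟩ := ih (by rw [heq] at h; linarith)
      refine ⟨d, ⟨by have := hd.lt; omega, hd.left_eq_one, hd.right_eq_zero, fun i h₁ h₂ => ?_⟩⟩
      rcases Nat.lt_succ_iff_lt_or_eq.mp h₂ with h₂ | rfl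
      · exact hd.eq_of_lt i h₁ h₂
      · exact heq.symm
    · exfalso
      have hlow := sum_mul_pow_le_pow_sub_one hQ (c := fun i => (β i : ℝ))
        (fun i => by exact_mod_cast hβ i) n
      have hlow' : 0 ≤ ∑ i ∈ range n, (β' i : ℝ) * Q ^ i := by positivity
      have hgt' : (β n : ℝ) + 1 ≤ β' n := by exact_mod_cast hgt
      nlinarith [pow_pos (show (0 : ℝ) < Q by linarith) n]

namespace TopDiffAt

variable {n d m : ℕ} {β β' : ℕ → ℕ}

theorem sum_sub_sum (h : TopDiffAt n β β' d) (f : ℕ → ℝ) :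
    ∑ i ∈ range n, (β i : ℝ) * f i - ∑ i ∈ range n, (β' i : ℝ) * f i =
      f d + ∑ i ∈ range d, ((β i : ℝ) - β' i) * f i := by
  have htail : ∑ i ∈ Ico (d + 1) n, ((β i : ℝ) - β' i) * f i = 0 :=
    sum_eq_zero fun i hi => by
      rw [mem_Ico] at hi
      rw [h.eq_of_lt i (by omega) hi.2, sub_self, zero_mul]
  simp_rw [← sum_sub_distrib, ← sub_mul]
  rw [← sum_range_add_sum_Ico _ h.lt, htail, add_zero, sum_range_succ, h.left_eq_one,
    h.right_eq_zero]
  push_cast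
  ring

theorem abs_sum_sub_sum_le (h : TopDiffAt n β β' d) (hβ : ∀ i, β i ≤ 1) (hβ' : ∀ i, β' i ≤ 1)
    (f : ℕ → ℝ) :
    |∑ i ∈ range n, (β i : ℝ) * f i - ∑ i ∈ range n, (β' i : ℝ) * f i| ≤
      ∑ i ∈ range (d + 1), |f i| := by
  rw [h.sum_sub_sum, sum_range_succ, add_comm _ |f d|]
  refine (abs_add_le _ _).trans ?_
  gcongr
  refine (abs_sum_le_sum_abs _ _).trans (sum_le_sum fun i _ => ?_)
  rw [abs_mul]
  refine mul_le_of_le_one_left (abs_nonneg _) (abs_le.mpr ⟨?_, ?_⟩)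
  · have : (β' i : ℝ) ≤ 1 := by exact_mod_cast hβ' i
    have : (0 : ℝ) ≤ β i := by positivity
    linarith
  · have : (β i : ℝ) ≤ 1 := by exact_mod_cast hβ i
    have : (0 : ℝ) ≤ β' i := by positivity
    linarith

theorem one_le_sum_sub_sum (h : TopDiffAt n β β' d) (hβ' : ∀ i, β' i ≤ 1) {Q : ℝ}
    (hQ : 2 ≤ Q) :
    1 ≤ ∑ i ∈ range n, (β i : ℝ) * Q ^ i - ∑ i ∈ range n, (β' i : ℝ) * Q ^ i := by
  have hlow := sum_mul_pow_le_pow_sub_one hQ (c := fun i => (β' i : ℝ) - β i)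
    (fun i => by
      have : (β' i : ℝ) ≤ 1 := by exact_mod_cast hβ' i
      have : (0 : ℝ) ≤ β i := by positivity
      linarith) d
  have hneg : ∑ i ∈ range d, ((β i : ℝ) - β' i) * Q ^ i =
      -∑ i ∈ range d, ((β' i : ℝ) - β i) * Q ^ i := by
    rw [← sum_neg_distrib]
    exact sum_congr rfl fun i _ => by ring
  rw [h.sum_sub_sum, hneg]
  linarith

theorem pow_le_sum_sub_sum (h : TopDiffAt n β β' (m + 2)) (hβ' : ∀ i, β' i ≤ 1)
    (hadj : β' m * β' (m + 1) = 0) {Q : ℝ} (hQ : 2 ≤ Q) :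
    Q ^ m ≤ ∑ i ∈ range n, (β i : ℝ) * Q ^ i - ∑ i ∈ range n, (β' i : ℝ) * Q ^ i := by
  have hQ₀ : 0 ≤ Q := by linarith
  have hlow : -∑ i ∈ range (m + 2), (β' i : ℝ) * Q ^ i ≤
      ∑ i ∈ range (m + 2), ((β i : ℝ) - β' i) * Q ^ i := by
    rw [← sum_neg_distrib]
    gcongr with i
    have : (0 : ℝ) ≤ β i * Q ^ i := by positivity
    linarith
  have hbelow := sum_mul_pow_le_pow_sub_one hQ (c := fun i => (β' i : ℝ))
    (fun i => by exact_mod_cast hβ' i) m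
  have htop : (β' m : ℝ) * Q ^ m + β' (m + 1) * Q ^ (m + 1) ≤ Q ^ (m + 1) := by
    have hm : (β' m : ℝ) ≤ 1 := by exact_mod_cast hβ' m
    have hm₁ : (β' (m + 1) : ℝ) ≤ 1 := by exact_mod_cast hβ' (m + 1)
    rcases Nat.mul_eq_zero.mp hadj with h₀ | h₀ <;> simp only [h₀, Nat.cast_zero, zero_mul]
    · linarith [mul_le_of_le_one_left (pow_nonneg hQ₀ (m + 1)) hm₁]
    · linarith [mul_le_of_le_one_left (pow_nonneg hQ₀ m) hm,
        pow_le_pow_right₀ (show 1 ≤ Q by linarith) (show m ≤ m + 1 by omega)]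
  rw [sum_range_succ, sum_range_succ] at hlow
  rw [h.sum_sub_sum]
  have : 2 * Q ^ m ≤ Q ^ (m + 1) := by rw [pow_succ]; nlinarith [pow_nonneg hQ₀ m]
  have : 2 * Q ^ (m + 1) ≤ Q ^ (m + 2) := by
    rw [pow_succ Q (m + 1)]; nlinarith [pow_nonneg hQ₀ (m + 1)]
  linarith

end TopDiffAt

section APoly

variable {α : Type*} [DecidableEq α]

theorem APolyR_eval (w : List α) (x : ℝ) :
    (APolyR w).eval x = ∑ i ∈ range w.length, (acorrBit w (i + 1) : ℝ) * x ^ i := by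
  simp [APolyR, Polynomial.eval_finsetSum]

theorem mul_derivative_APolyR_eval (w : List α) (x : ℝ) :
    x * (APolyR w).derivative.eval x =
      ∑ i ∈ range w.length, (acorrBit w (i + 1) : ℝ) * (i * x ^ i) := by
  rw [APolyR, Polynomial.derivative_sum, Polynomial.eval_finsetSum, mul_sum]
  refine sum_congr rfl fun i _ => ?_
  rw [Polynomial.derivative_C_mul_X_pow]
  rcases i with _ | i
  · simp
  · simp [pow_succ]
    ring

theorem pow_pred_length_le_APolyR_eval {w : List α} (hw : w ≠ []) {x : ℝ} (hx : 0 ≤ x) :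
    x ^ (w.length - 1) ≤ (APolyR w).eval x := by
  have hk : w.length - 1 + 1 = w.length := Nat.sub_add_cancel (List.length_pos_of_ne_nil hw)
  rw [APolyR_eval]
  refine le_of_eq_of_le ?_ (single_le_sum (fun i _ => by positivity)
    (mem_range.mpr (Nat.sub_lt (List.length_pos_of_ne_nil hw) one_pos)))
  simp [hk, acorrBit]

theorem APolyR_eval_le_pow_length (w : List α) {x : ℝ} (hx : 2 ≤ x) :
    (APolyR w).eval x ≤ x ^ w.length := by
  rw [APolyR_eval]
  linarith [sum_mul_pow_le_pow_sub_one hx (c := fun i => (acorrBit w (i + 1) : ℝ))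
    (fun i => by exact_mod_cast acorrBit_le_one w (i + 1)) w.length]

theorem derivative_APolyR_eval_nonneg (w : List α) {x : ℝ} (hx : 0 < x) :
    0 ≤ (APolyR w).derivative.eval x := by
  refine nonneg_of_mul_nonneg_right ?_ hx
  rw [mul_derivative_APolyR_eval]
  positivity

theorem mul_derivative_APolyR_eval_le (w : List α) {x : ℝ} (hx : 0 ≤ x) :
    x * (APolyR w).derivative.eval x ≤ w.length * (APolyR w).eval x := by
  rw [mul_derivative_APolyR_eval, APolyR_eval, mul_sum]
  refine sum_le_sum fun i hi => ?_
  rw [mul_left_comm]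
  gcongr
  exact (mem_range.mp hi).le

end APoly

section Pair

variable {α : Type*} [DecidableEq α] {w w' : List α} {d : ℕ}

theorem exists_topDiffAt_of_APolyR_eval_two_lt (hlen : w'.length = w.length)
    (h : (APolyR w').eval 2 < (APolyR w).eval 2) :
    ∃ d, TopDiffAt w.length (fun i => acorrBit w (i + 1)) (fun i => acorrBit w' (i + 1)) d :=
  exists_topDiffAt_of_sum_lt le_rfl (fun i => acorrBit_le_one w (i + 1))
    (by rwa [APolyR_eval, APolyR_eval, hlen] at h)

theorem one_le_APolyR_eval_sub (hlen : w'.length = w.length)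
    (h : TopDiffAt w.length (fun i => acorrBit w (i + 1)) (fun i => acorrBit w' (i + 1)) d)
    {Q : ℝ} (hQ : 2 ≤ Q) : 1 ≤ (APolyR w).eval Q - (APolyR w').eval Q := by
  rw [APolyR_eval, APolyR_eval, hlen]
  exact h.one_le_sum_sub_sum (fun i => acorrBit_le_one w' (i + 1)) hQ

theorem abs_derivative_APolyR_eval_sub_le (hlen : w'.length = w.length)
    (h : TopDiffAt w.length (fun i => acorrBit w (i + 1)) (fun i => acorrBit w' (i + 1)) d)
    {Q : ℝ} (hQ : 2 ≤ Q) :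
    |(APolyR w).derivative.eval Q - (APolyR w').derivative.eval Q| ≤ w.length * Q ^ d := by
  have hQ₀ : 0 < Q := by linarith
  refine le_of_mul_le_mul_left ?_ hQ₀
  calc Q * |(APolyR w).derivative.eval Q - (APolyR w').derivative.eval Q|
      = |Q * (APolyR w).derivative.eval Q - Q * (APolyR w').derivative.eval Q| := by
        rw [← mul_sub, abs_mul, abs_of_pos hQ₀]
    _ ≤ ∑ i ∈ range (d + 1), |(i : ℝ) * Q ^ i| := by
        rw [mul_derivative_APolyR_eval, mul_derivative_APolyR_eval, hlen]
        exact h.abs_sum_sub_sum_le (fun i => acorrBit_le_one w (i + 1))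
          (fun i => acorrBit_le_one w' (i + 1)) _
    _ ≤ ∑ i ∈ range (d + 1), (w.length : ℝ) * Q ^ i := by
        refine sum_le_sum fun i hi => ?_
        rw [abs_of_nonneg (by positivity)]
        gcongr
        have := h.lt
        have := mem_range.mp hi
        omega
    _ ≤ w.length * Q ^ (d + 1) := by
        rw [← mul_sum]
        gcongr
        have := sum_mul_pow_le_pow_sub_one hQ (c := fun _ => 1) (fun _ => le_rfl) (d + 1)
        simp only [one_mul] at this
        linarith
    _ = Q * (w.length * Q ^ d) := by ring

theorem pow_le_pow_mul_APolyR_eval_sub (hlen : w'.length = w.length)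
    (h : TopDiffAt w.length (fun i => acorrBit w (i + 1)) (fun i => acorrBit w' (i + 1)) d)
    {Q : ℝ} (hQ : 2 ≤ Q) :
    Q ^ d ≤ Q ^ (w.length / 2 + 2) * ((APolyR w).eval Q - (APolyR w').eval Q) := by
  have hQ₁ : 1 ≤ Q := by linarith
  by_cases hd : 2 * d ≤ w.length
  · calc Q ^ d ≤ Q ^ (w.length / 2 + 2) := pow_le_pow_right₀ hQ₁ (by omega)
      _ ≤ _ := le_mul_of_one_le_right (by positivity) (one_le_APolyR_eval_sub hlen h hQ)
  obtain ⟨m, rfl⟩ : ∃ m, d = m + 2 := ⟨d - 2, by have := h.lt; omega⟩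
  have hadj : acorrBit w' (m + 1) * acorrBit w' (m + 1 + 1) = 0 := by
    by_contra hne
    obtain ⟨h₁, h₂⟩ := Nat.mul_ne_zero_iff.mp hne
    have := acorrBit_le_one w' (m + 1)
    have := acorrBit_le_one w' (m + 1 + 1)
    have := h.lt
    have hall := acorrBit_eq_one_of_consecutive (w := w') (n := m + 1) (by omega) (by omega)
      (by omega) (by omega) (m + 2 + 1)
    exact absurd h.right_eq_zero (by omega)
  calc Q ^ (m + 2) = Q ^ 2 * Q ^ m := by ring
    _ ≤ Q ^ (w.length / 2 + 2) * Q ^ m := by gcongr; omega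
    _ ≤ _ := by
        gcongr
        rw [APolyR_eval, APolyR_eval, hlen]
        exact h.pow_le_sum_sub_sum (fun i => acorrBit_le_one w' (i + 1)) hadj hQ

end Pair

theorem pow_div_two_add_two_mul_le {Q : ℝ} (hQ : 1 ≤ Q) {k : ℕ} (hk : 1 ≤ k) :
    Q ^ (k / 2 + 2) * Q ≤ Q ^ (-(k : ℝ) / 3 + 4) * Q ^ (k - 1) := by
  rw [← pow_succ, ← Real.rpow_natCast, ← Real.rpow_natCast Q (k - 1),
    ← Real.rpow_add (by linarith)]
  refine Real.rpow_le_rpow_of_exponent_le hQ ?_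
  have : ((k / 2 : ℕ) : ℝ) ≤ k / 2 := Nat.cast_div_le
  push_cast [Nat.cast_sub hk]
  linarith

theorem abs_div_cube_sub_le {Q K X G F a b da db : ℝ} (hQ : 1 ≤ Q) (hX : 0 < X) (hG : 1 ≤ G)
    (hb : X ≤ b) (hba : b < a) (ha : a ≤ Q * X) (hda₀ : 0 ≤ da) (hda : Q * da ≤ K * a)
    (hdiff : |da - db| ≤ K * G * (a - b)) (hGF : G * Q ≤ F * X) :
    |a ^ 3 * db - b ^ 3 * da| / (b ^ 3 * a ^ 3) ≤ 4 * K * F * ((a - b) / (b * a)) := by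
  have hb₀ : 0 < b := hX.trans_le hb
  have ha₀ : 0 < a := hb₀.trans hba
  have hab : 0 < a - b := sub_pos.mpr hba
  have hK : 0 ≤ K := by
    refine nonneg_of_mul_nonneg_left (b := G * (a - b))
      ((abs_nonneg _).trans (hdiff.trans_eq ?_)) (mul_pos (by linarith) hab)
    ring
  have hFX : 1 ≤ F * X := (one_le_mul_of_one_le_of_one_le hG hQ).trans hGF
  have hF : 0 ≤ F := nonneg_of_mul_nonneg_left (by linarith) hX
  have hXX : X * X ≤ b ^ 2 := by nlinarith
  have hda' : da ≤ K * X := by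
    refine le_of_mul_le_mul_left ?_ (by linarith : 0 < Q)
    nlinarith
  have hcube₀ : 0 ≤ a ^ 3 - b ^ 3 := by
    nlinarith [pow_le_pow_left₀ hb₀.le hba.le 3]
  have hcube : a ^ 3 - b ^ 3 ≤ 3 * a ^ 2 * (a - b) := by
    nlinarith [mul_nonneg (mul_nonneg hab.le hab.le) (by positivity : 0 ≤ 2 * a + b)]
  have h₁ : a ^ 3 * |da - db| ≤ K * F * (a - b) * (b ^ 2 * a ^ 2) :=
    calc a ^ 3 * |da - db| ≤ a ^ 3 * (K * G * (a - b)) := by gcongr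
      _ = K * (a - b) * a ^ 2 * (G * a) := by ring
      _ ≤ K * (a - b) * a ^ 2 * (G * Q * X) := by
          rw [mul_assoc G]; gcongr
      _ ≤ K * (a - b) * a ^ 2 * (F * (X * X)) := by rw [← mul_assoc F]; gcongr
      _ ≤ K * F * (a - b) * (b ^ 2 * a ^ 2) := by
          have : F * (X * X) ≤ F * b ^ 2 := by gcongr
          nlinarith [mul_nonneg (mul_nonneg hK hab.le) (sq_nonneg a)]
  have h₂ : da * (a ^ 3 - b ^ 3) ≤ 3 * K * F * (a - b) * (b ^ 2 * a ^ 2) :=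
    calc da * (a ^ 3 - b ^ 3) ≤ K * X * (3 * a ^ 2 * (a - b)) :=
          mul_le_mul hda' hcube hcube₀ (by positivity)
      _ = 3 * K * (a - b) * a ^ 2 * (X * 1) := by ring
      _ ≤ 3 * K * (a - b) * a ^ 2 * (X * (F * X)) := by gcongr
      _ ≤ 3 * K * F * (a - b) * (b ^ 2 * a ^ 2) := by
          have : F * (X * X) ≤ F * b ^ 2 := by gcongr
          nlinarith [mul_nonneg (mul_nonneg hK hab.le) (sq_nonneg a)]
  rw [div_le_iff₀ (by positivity)]
  calc |a ^ 3 * db - b ^ 3 * da| = |-(a ^ 3 * (da - db)) + da * (a ^ 3 - b ^ 3)| := by ring_nf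
    _ ≤ a ^ 3 * |da - db| + da * (a ^ 3 - b ^ 3) := by
        refine (abs_add_le _ _).trans_eq ?_
        rw [abs_neg, abs_of_nonneg (mul_nonneg hda₀ hcube₀), abs_mul, abs_of_pos (pow_pos ha₀ 3)]
    _ ≤ 4 * K * F * (a - b) * (b ^ 2 * a ^ 2) := by linarith
    _ = 4 * K * F * ((a - b) / (b * a)) * (b ^ 3 * a ^ 3) := by field_simp

/-- There is `C > 0` such that for all `q ≥ 2`, `k ≥ 9` and words `w, w'`
of common length `k` with the autocorrelation of `w` larger than that of `w'`,
`|A_w(q)³·A_{w'}'(q) − A_{w'}(q)³·A_w'(q)|/(A_{w'}(q)³·A_w(q)³)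
  ≤ C·k·q^(−k/3+4)·(A_w(q) − A_{w'}(q))/(A_{w'}(q)·A_w(q))`. -/
theorem stmt13 :
    ∃ C : ℝ, 0 < C ∧ ∀ (q k : ℕ), 2 ≤ q → 9 ≤ k →
      ∀ w w' : List (Fin q), w.length = k → w'.length = k →
        (APolyR w').eval 2 < (APolyR w).eval 2 →
        |(APolyR w).eval (q : ℝ) ^ 3 * (APolyR w').derivative.eval (q : ℝ) -
            (APolyR w').eval (q : ℝ) ^ 3 * (APolyR w).derivative.eval (q : ℝ)| /
          ((APolyR w').eval (q : ℝ) ^ 3 * (APolyR w).eval (q : ℝ) ^ 3) ≤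
        C * k * (q : ℝ) ^ (-(k : ℝ) / 3 + 4) *
          (((APolyR w).eval (q : ℝ) - (APolyR w').eval (q : ℝ)) /
            ((APolyR w').eval (q : ℝ) * (APolyR w).eval (q : ℝ))) := by
  refine ⟨4, by norm_num, fun q k hq hk w w' hw hw' hlt => ?_⟩
  subst hw
  have hQ : (2 : ℝ) ≤ q := by exact_mod_cast hq
  have hlen : w'.length = w.length := hw'
  have hw'ne : w' ≠ [] := List.ne_nil_of_length_pos (by omega)
  obtain ⟨d, hd⟩ := exists_topDiffAt_of_APolyR_eval_two_lt hlen hlt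
  have hab := one_le_APolyR_eval_sub hlen hd hQ
  refine abs_div_cube_sub_le (X := (q : ℝ) ^ (w.length - 1)) (G := (q : ℝ) ^ (w.length / 2 + 2))
    (by linarith) (by positivity) (one_le_pow₀ (by linarith))
    (hlen ▸ pow_pred_length_le_APolyR_eval hw'ne (by linarith)) (by linarith)
    ?_ (derivative_APolyR_eval_nonneg w (by linarith))
    (mul_derivative_APolyR_eval_le w (by linarith)) ?_
    (pow_div_two_add_two_mul_le (by linarith) (by omega))
  · rw [← pow_succ', Nat.sub_add_cancel (by omega)]
    exact APolyR_eval_le_pow_length w hQ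
  · calc _ ≤ w.length * (q : ℝ) ^ d := abs_derivative_APolyR_eval_sub_le hlen hd hQ
      _ ≤ w.length * ((q : ℝ) ^ (w.length / 2 + 2) * _) := by
          gcongr
          exact pow_le_pow_mul_APolyR_eval_sub hlen hd hQ
      _ = _ := by ring
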